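/- Let G be a finite simple graph with vertex set {1,…,n} and edge set E, and let k ≥ 2. Then G admits a proper k-colouring if and only if there exists a vector (a_1,…,a_n) ∈ ℂ^n with all a_i nonzero such that ∑_{l=1}^{k} a_i^{k-l} a_j^{l-1} = 0 for every edge (i,j) ∈ E. -/
import Mathlib

open Finset Complex

lemma sum_reindex_aux (k : ℕ) (x y : ℂ) :
    ∑ l ∈ Finset.Icc 1 k, x ^ (k - l) * y ^ (l - 1)
      = ∑ i ∈ Finset.range k, y ^ i * x ^ (k - 1 - i) := by
  refine Finset.sum_nbij' (fun l => l - 1) (fun m => m + 1) ?_ ?_ ?_ ?_ ?_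
  · intro l hl; simp only [Finset.mem_Icc] at hl; simp only [Finset.mem_range]; omega
  · intro m hm; simp only [Finset.mem_range] at hm; simp only [Finset.mem_Icc]; omega
  · intro l hl; simp only [Finset.mem_Icc] at hl; omega
  · intro m hm; omega
  · intro l hl
    simp only [Finset.mem_Icc] at hl
    have h2 : k - 1 - (l - 1) = k - l := by omega
    rw [h2, mul_comm]

/-- Let `G` be a finite simple graph with vertex set `{1,…,n}` and let `k ≥ 2`. Then `G`
admits a proper `k`-colouring if and only if there exists a vector `(a_1,…,a_n) ∈ ℂ^n`
with all `a_i` nonzero such that `∑_{l=1}^{k} a_i^{k-l} a_j^{l-1} = 0` for every edge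
`(i,j)` of `G`. -/
theorem stmt_6 (n k : ℕ) (hk : 2 ≤ k) (G : SimpleGraph (Fin n)) :
    (∃ c : Fin n → Fin k, ∀ i j, G.Adj i j → c i ≠ c j) ↔
      (∃ a : Fin n → ℂ, (∀ i, a i ≠ 0) ∧
        ∀ i j, G.Adj i j → ∑ l ∈ Finset.Icc 1 k, (a i) ^ (k - l) * (a j) ^ (l - 1) = 0) := by
  have hk0 : k ≠ 0 := by omega
  have hζ : IsPrimitiveRoot (Complex.exp (2 * Real.pi * Complex.I / k)) k :=
    Complex.isPrimitiveRoot_exp k hk0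
  set ζ := Complex.exp (2 * Real.pi * Complex.I / k) with hζdef
  have hζne : ζ ≠ 0 := hζ.ne_zero hk0
  constructor
  · rintro ⟨c, hc⟩
    refine ⟨fun i => ζ ^ (c i : ℕ), fun i => pow_ne_zero _ hζne, ?_⟩
    intro i j hij
    have hxy : ζ ^ (c j : ℕ) ≠ ζ ^ (c i : ℕ) := by
      intro h
      exact hc i j hij (Fin.ext (hζ.pow_inj (c i).isLt (c j).isLt h.symm))
    have hpow : (ζ ^ (c j : ℕ)) ^ k = (ζ ^ (c i : ℕ)) ^ k := by
      rw [← pow_mul, mul_comm, pow_mul, hζ.pow_eq_one, ← pow_mul, mul_comm, pow_mul,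
        hζ.pow_eq_one, one_pow, one_pow]
    have hgs := geom_sum₂_mul (ζ ^ (c j : ℕ)) (ζ ^ (c i : ℕ)) k
    rw [sum_reindex_aux]
    have := sub_eq_zero.mpr hpow
    rw [this] at hgs
    rcases mul_eq_zero.mp hgs with h | h
    · exact h
    · exact absurd (sub_eq_zero.mp h) hxy
  · rintro ⟨a, ha0, ha⟩
    have hroot : ∀ z : ℂ, ∃ w : ℂ, w ^ k = z := fun z =>
      IsAlgClosed.exists_pow_nat_eq z (by omega)
    set b : ℂ → ℂ := fun z => Classical.choose (hroot z) with hbdef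
    have hb : ∀ z, b z ^ k = z := fun z => Classical.choose_spec (hroot z)
    have hbne : ∀ i, b (a i ^ k) ≠ 0 := by
      intro i h
      have := hb (a i ^ k)
      rw [h] at this
      simp [hk0] at this
      exact pow_ne_zero k (ha0 i) this.symm
    have hu : ∀ i, (a i / b (a i ^ k)) ^ k = 1 := by
      intro i
      rw [div_pow, hb, div_self (pow_ne_zero k (ha0 i))]
    haveI : NeZero k := ⟨hk0⟩
    have hex : ∀ i, ∃ m, m < k ∧ ζ ^ m = a i / b (a i ^ k) := by
      intro i
      obtain ⟨m, hm, hmu⟩ := hζ.eq_pow_of_pow_eq_one (hu i)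
      exact ⟨m, hm, hmu⟩
    choose m hm hmu using hex
    refine ⟨fun i => ⟨m i, hm i⟩, ?_⟩
    intro i j hij hcij
    have hsum := ha i j hij
    -- a i ≠ a j
    have hne : a i ≠ a j := by
      intro h
      rw [← h] at hsum
      have heach : ∀ l ∈ Finset.Icc 1 k, a i ^ (k - l) * a i ^ (l - 1) = a i ^ (k - 1) := by
        intro l hl
        simp only [Finset.mem_Icc] at hl
        rw [← pow_add]
        congr 1
        omega
      rw [Finset.sum_congr rfl heach, Finset.sum_const, Nat.card_Icc] at hsum
      simp only [Nat.add_sub_cancel, nsmul_eq_mul] at hsum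
      rcases mul_eq_zero.mp hsum with h' | h'
      · exact hk0 (by exact_mod_cast h')
      · exact pow_ne_zero _ (ha0 i) h'
    -- a i ^ k = a j ^ k
    have heq : a i ^ k = a j ^ k := by
      have hgs := geom_sum₂_mul (a j) (a i) k
      rw [← sum_reindex_aux, hsum, zero_mul] at hgs
      exact (sub_eq_zero.mp hgs.symm).symm
    -- conclude a i = a j
    have hmij : m i = m j := congrArg Fin.val hcij
    have : a i / b (a i ^ k) = a j / b (a j ^ k) := by
      rw [← hmu i, ← hmu j, hmij]
    rw [heq] at this
    exact hne ((div_left_inj' (hbne j)).mp this)
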